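/- Let G be a bounded Vilenkin group, 0 < p ≤ 1, a a p-atom supported on I_N, and α > M_N. If x ∈ I_s \ I_{s+1} with ⟨α⟩ ≤ s ≤ N − 1, then |S_α a(x)| ≤ c_p M_N^{1/p − 1} M_s, with c_p depending only on p and sup_k m_k. -/

import Mathlib

open MeasureTheory Complex Real

def Mseq (m : ℕ → ℕ) : ℕ → ℕ
  | 0 => 1
  | k + 1 => m k * Mseq m k

def digit (m : ℕ → ℕ) (n j : ℕ) : ℕ := n / Mseq m j % m j

noncomputable def hi (m : ℕ → ℕ) (n : ℕ) : ℕ := sSup {j | digit m n j ≠ 0}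

noncomputable def lo (m : ℕ → ℕ) (n : ℕ) : ℕ := sInf {j | digit m n j ≠ 0}

noncomputable def rho (m : ℕ → ℕ) (n : ℕ) : ℕ := hi m n - lo m n

abbrev Gm (m : ℕ → ℕ) := ∀ k, ZMod (m k)

instance (n : ℕ) : MeasurableSpace (ZMod n) := ⊤

noncomputable def rad (m : ℕ → ℕ) (j : ℕ) (x : Gm m) : ℂ :=
  Complex.exp (2 * Real.pi * Complex.I * ((x j).val : ℂ) / (m j : ℂ))

noncomputable def vil (m : ℕ → ℕ) (n : ℕ) (x : Gm m) : ℂ :=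
  ∏ᶠ j, rad m j x ^ digit m n j

noncomputable def Dker (m : ℕ → ℕ) (n : ℕ) (x : Gm m) : ℂ :=
  ∑ k ∈ Finset.range n, vil m k x

/-- The defining property of the normalized Haar measure on the Vilenkin group:
every cylinder set `I_n(x)` has measure `1 / M_n`. -/
def IsVilenkinHaar (m : ℕ → ℕ) (μ : Measure (Gm m)) : Prop :=
  ∀ (n : ℕ) (x : Gm m), μ {y : Gm m | ∀ j < n, y j = x j} = (Mseq m n : ENNReal)⁻¹

noncomputable def vilCoeff (m : ℕ → ℕ) (μ : Measure (Gm m)) (f : Gm m → ℂ) (j : ℕ) : ℂ :=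
  ∫ t, f t * (starRingEnd ℂ) (vil m j t) ∂μ

noncomputable def Svil (m : ℕ → ℕ) (μ : Measure (Gm m)) (f : Gm m → ℂ) (n : ℕ) (x : Gm m) : ℂ :=
  ∑ j ∈ Finset.range n, vilCoeff m μ f j * vil m j x

/-- `a : G_m → ℂ` is a `p`-atom supported on the cylinder `I_N`: it is measurable,
vanishes off `I_N`, satisfies `‖a‖_∞ ≤ μ(I_N)^{-1/p} = M_N^{1/p}` and has mean zero. -/
def IsPAtom (m : ℕ → ℕ) (μ : Measure (Gm m)) (p : ℝ) (N : ℕ) (a : Gm m → ℂ) : Prop :=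
  Measurable a ∧
    (∀ x : Gm m, (¬ ∀ j < N, x j = 0) → a x = 0) ∧
    (∀ x : Gm m, ‖a x‖ ≤ (Mseq m N : ℝ) ^ (1 / p)) ∧
    ∫ x, a x ∂μ = 0

/-! Write `α = q M_N + r` with `r < M_N`. On `I_N` the characters `ψ_{q M_N + i}` (`vil`) with
`i < M_N` all agree with `ψ_{q M_N}`, so the Fourier coefficients (`vilCoeff`) of an atom are
constant on each block `[q M_N, (q+1) M_N)`, and `S_α a(x)` collapses to `â(q M_N) ψ_{q M_N}(x) D_r(x)`
because every full block contributes a multiple of `D_{M_N}(x) = 0` (as `x ∉ I_N`). The coefficient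
is at most `‖a‖_∞ μ(I_N) ≤ M_N^{1/p-1}`. The same block decomposition at level `s + 1` gives
`|D_r(x)| = |D_{r mod M_{s+1}}(x)| ≤ M_{s+1} ≤ m_* M_s`. -/

lemma Mseq_dvd_Mseq {m : ℕ → ℕ} {L J : ℕ} (h : L ≤ J) : Mseq m L ∣ Mseq m J := by
  induction J, h using Nat.le_induction with
  | base => exact dvd_rfl
  | succ J _ ih => exact ih.trans (Dvd.intro_left (m J) rfl)

lemma rad_eq_pow (m : ℕ → ℕ) (j : ℕ) (x : Gm m) :
    rad m j x = Complex.exp (2 * π * Complex.I / m j) ^ (x j).val := by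
  rw [rad, ← Complex.exp_nat_mul]
  congr 1
  ring

section Vilenkin

variable {m : ℕ → ℕ} (hm : ∀ k, 2 ≤ m k)
include hm

lemma Mseq_pos (L : ℕ) : 0 < Mseq m L := by
  induction L with
  | zero => exact Nat.one_pos
  | succ L ih => exact Nat.mul_pos (by linarith [hm L]) ih

lemma lt_Mseq (n : ℕ) : n < Mseq m n := by
  induction n with
  | zero => exact Nat.one_pos
  | succ n ih =>
    have : 2 * Mseq m n ≤ m n * Mseq m n := Nat.mul_le_mul_right _ (hm n)
    simp only [Mseq]
    omega

lemma digit_eq_zero_of_lt_Mseq {n L j : ℕ} (hn : n < Mseq m L) (hj : L ≤ j) :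
    digit m n j = 0 := by
  rw [digit, Nat.div_eq_of_lt (hn.trans_le (Nat.le_of_dvd (Mseq_pos hm j) (Mseq_dvd_Mseq hj))),
    Nat.zero_mod]

lemma digit_mul_Mseq_add_of_lt {L j : ℕ} (hj : j < L) (q r : ℕ) :
    digit m (q * Mseq m L + r) j = digit m r j := by
  obtain ⟨k, hk⟩ := Mseq_dvd_Mseq (m := m) (Nat.succ_le_of_lt hj)
  rw [digit, digit, hk, Mseq, show q * (m j * Mseq m j * k) + r = r + q * k * m j * Mseq m j by ring,
    Nat.add_mul_div_right _ _ (Mseq_pos hm j), Nat.add_mul_mod_self_right]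

lemma digit_mul_Mseq_of_lt {L j : ℕ} (hj : j < L) (q : ℕ) : digit m (q * Mseq m L) j = 0 := by
  simpa [digit] using digit_mul_Mseq_add_of_lt hm hj q 0

lemma digit_mul_Mseq_add_of_le {L j r : ℕ} (hr : r < Mseq m L) (hj : L ≤ j) (q : ℕ) :
    digit m (q * Mseq m L + r) j = digit m (q * Mseq m L) j := by
  obtain ⟨e, he⟩ := Mseq_dvd_Mseq (m := m) hj
  have hL := Mseq_pos hm L
  rw [digit, digit, he, ← Nat.div_div_eq_div_mul, ← Nat.div_div_eq_div_mul, mul_comm q,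
    Nat.mul_add_div hL, Nat.div_eq_of_lt hr, Nat.mul_div_cancel_left _ hL, add_zero]

lemma digit_mul_Mseq_add {L r : ℕ} (hr : r < Mseq m L) (q j : ℕ) :
    digit m (q * Mseq m L + r) j = digit m (q * Mseq m L) j + digit m r j := by
  rcases lt_or_ge j L with hj | hj
  · rw [digit_mul_Mseq_add_of_lt hm hj, digit_mul_Mseq_of_lt hm hj, zero_add]
  · rw [digit_mul_Mseq_add_of_le hm hr hj, digit_eq_zero_of_lt_Mseq hm hr hj, add_zero]

lemma vil_eq_prod {n L : ℕ} (hn : n < Mseq m L) (x : Gm m) :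
    vil m n x = ∏ j ∈ Finset.range L, rad m j x ^ digit m n j := by
  refine finprod_eq_prod_of_mulSupport_subset _ fun j hj => ?_
  by_contra hjL
  rw [Finset.coe_range, Set.mem_Iio, not_lt] at hjL
  exact hj (show rad m j x ^ digit m n j = 1 by rw [digit_eq_zero_of_lt_Mseq hm hn hjL, pow_zero])

lemma norm_rad (j : ℕ) (x : Gm m) : ‖rad m j x‖ = 1 := by
  have hmj : m j ≠ 0 := by linarith [hm j]
  rw [rad_eq_pow, norm_pow, (Complex.isPrimitiveRoot_exp _ hmj).norm'_eq_one hmj, one_pow]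

lemma norm_vil (n : ℕ) (x : Gm m) : ‖vil m n x‖ = 1 :=
  finprod_induction (fun z : ℂ => ‖z‖ = 1) norm_one
    (fun z w hz hw => by rw [norm_mul, hz, hw, one_mul])
    (fun j => by rw [norm_pow, norm_rad hm, one_pow])

lemma vil_mul_Mseq_add {L r : ℕ} (hr : r < Mseq m L) (q : ℕ) (x : Gm m) :
    vil m (q * Mseq m L + r) x = vil m (q * Mseq m L) x * vil m r x := by
  have hn := lt_Mseq hm (q * Mseq m L + r)
  rw [vil_eq_prod hm hn, vil_eq_prod hm ((Nat.le_add_right _ _).trans_lt hn),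
    vil_eq_prod hm ((Nat.le_add_left _ _).trans_lt hn), ← Finset.prod_mul_distrib]
  exact Finset.prod_congr rfl fun j _ => by rw [digit_mul_Mseq_add hm hr, pow_add]

lemma vil_mul_Mseq {L d : ℕ} (hd : d < m L) (x : Gm m) :
    vil m (d * Mseq m L) x = rad m L x ^ d := by
  have hlt : d * Mseq m L < Mseq m (L + 1) := Nat.mul_lt_mul_of_pos_right hd (Mseq_pos hm L)
  rw [vil_eq_prod hm hlt, Finset.prod_range_succ, Finset.prod_eq_one, one_mul]
  · rw [digit, Nat.mul_div_cancel _ (Mseq_pos hm L), Nat.mod_eq_of_lt hd]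
  · exact fun j hj => by rw [digit_mul_Mseq_of_lt hm (Finset.mem_range.mp hj), pow_zero]

lemma vil_eq_one {N r : ℕ} (hr : r < Mseq m N) {t : Gm m} (ht : ∀ j < N, t j = 0) :
    vil m r t = 1 := by
  rw [vil_eq_prod hm hr]
  exact Finset.prod_eq_one fun j hj => by
    rw [rad_eq_pow, ht j (Finset.mem_range.mp hj), ZMod.val_zero, pow_zero, one_pow]

lemma sum_range_rad_pow_eq_zero {L : ℕ} {x : Gm m} (hx : x L ≠ 0) :
    ∑ u ∈ Finset.range (m L), rad m L x ^ u = 0 := by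
  have hmL : m L ≠ 0 := by linarith [hm L]
  have hζ := Complex.isPrimitiveRoot_exp _ hmL
  have hpow : rad m L x ^ m L = 1 := by
    rw [rad_eq_pow, pow_right_comm, hζ.pow_eq_one, one_pow]
  have hne : rad m L x ≠ 1 := by
    have : NeZero (m L) := ⟨hmL⟩
    rw [rad_eq_pow, Ne, hζ.pow_eq_one_iff_dvd]
    exact fun hdvd => hx ((ZMod.val_eq_zero _).mp (Nat.eq_zero_of_dvd_of_lt hdvd (ZMod.val_lt _)))
  rw [geom_sum_eq hne, hpow, sub_self, zero_div]

lemma sum_range_mul_Mseq_add {L : ℕ} (c : ℕ → ℂ)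
    (hc : ∀ q i, i < Mseq m L → c (q * Mseq m L + i) = c (q * Mseq m L))
    (q : ℕ) {r : ℕ} (hr : r ≤ Mseq m L) (x : Gm m) :
    ∑ k ∈ Finset.range (q * Mseq m L + r), c k * vil m k x
      = (∑ j ∈ Finset.range q, c (j * Mseq m L) * vil m (j * Mseq m L) x) * Dker m (Mseq m L) x
        + c (q * Mseq m L) * vil m (q * Mseq m L) x * Dker m r x := by
  have hblock : ∀ q T, T ≤ Mseq m L →
      ∑ i ∈ Finset.range T, c (q * Mseq m L + i) * vil m (q * Mseq m L + i) x
        = c (q * Mseq m L) * vil m (q * Mseq m L) x * Dker m T x := by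
    intro q T hT
    rw [Dker, Finset.mul_sum]
    refine Finset.sum_congr rfl fun i hi => ?_
    have hi' := (Finset.mem_range.mp hi).trans_le hT
    rw [hc q i hi', vil_mul_Mseq_add hm hi']
    ring
  induction q generalizing r with
  | zero => simpa using hblock 0 r hr
  | succ q ih =>
    rw [Finset.sum_range_add, hblock (q + 1) r hr, Nat.succ_mul, ih le_rfl, Finset.sum_range_succ]
    ring

lemma Dker_mul_Mseq_add {L : ℕ} (q : ℕ) {r : ℕ} (hr : r ≤ Mseq m L) (x : Gm m) :
    Dker m (q * Mseq m L + r) x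
      = (∑ j ∈ Finset.range q, vil m (j * Mseq m L) x) * Dker m (Mseq m L) x
        + vil m (q * Mseq m L) x * Dker m r x := by
  have h := sum_range_mul_Mseq_add hm (fun _ => 1) (fun _ _ _ => rfl) q hr x
  simp only [one_mul] at h
  exact h

lemma Dker_Mseq_succ (L : ℕ) (x : Gm m) :
    Dker m (Mseq m (L + 1)) x
      = (∑ u ∈ Finset.range (m L), rad m L x ^ u) * Dker m (Mseq m L) x := by
  have h := Dker_mul_Mseq_add hm (m L) (Nat.zero_le (Mseq m L)) x
  rw [add_zero, show Dker m 0 x = 0 from Finset.sum_range_zero _, mul_zero, add_zero] at h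
  rw [show Mseq m (L + 1) = m L * Mseq m L from rfl, h]
  congr 1
  exact Finset.sum_congr rfl fun d hd => vil_mul_Mseq hm (Finset.mem_range.mp hd) x

lemma Dker_Mseq_eq_zero {t L : ℕ} (ht : t < L) {x : Gm m} (hx : x t ≠ 0) :
    Dker m (Mseq m L) x = 0 := by
  induction L with
  | zero => exact absurd ht (Nat.not_lt_zero t)
  | succ L ih =>
    rw [Dker_Mseq_succ hm]
    rcases Nat.lt_succ_iff_lt_or_eq.mp ht with htL | rfl
    · rw [ih htL, mul_zero]
    · rw [sum_range_rad_pow_eq_zero hm hx, zero_mul]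

lemma norm_Dker_le (n : ℕ) (x : Gm m) : ‖Dker m n x‖ ≤ n :=
  (norm_sum_le _ _).trans (by simp [norm_vil hm])

lemma norm_Dker_le_Mseq_succ {s : ℕ} {x : Gm m} (hx : x s ≠ 0) (n : ℕ) :
    ‖Dker m n x‖ ≤ Mseq m (s + 1) := by
  have hr := Nat.mod_lt n (Mseq_pos hm (s + 1))
  rw [← Nat.div_add_mod' n (Mseq m (s + 1)), Dker_mul_Mseq_add hm _ hr.le,
    Dker_Mseq_eq_zero hm (Nat.lt_succ_self s) hx, mul_zero, zero_add, norm_mul, norm_vil hm, one_mul]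
  exact (norm_Dker_le hm _ x).trans (Nat.cast_le.mpr hr.le)

lemma vilCoeff_mul_Mseq_add {N : ℕ} {a : Gm m → ℂ}
    (ha : ∀ t : Gm m, (¬ ∀ j < N, t j = 0) → a t = 0) (μ : Measure (Gm m))
    (q : ℕ) {i : ℕ} (hi : i < Mseq m N) :
    vilCoeff m μ a (q * Mseq m N + i) = vilCoeff m μ a (q * Mseq m N) := by
  unfold vilCoeff
  congr 1
  funext t
  by_cases ht : ∀ j < N, t j = 0
  · rw [vil_mul_Mseq_add hm hi, vil_eq_one hm hi ht, mul_one]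
  · rw [ha t ht, zero_mul, zero_mul]

lemma norm_vilCoeff_le {μ : Measure (Gm m)} (hμ : IsVilenkinHaar m μ) {N : ℕ} {a : Gm m → ℂ}
    (ha : ∀ t : Gm m, (¬ ∀ j < N, t j = 0) → a t = 0) {C : ℝ} (hC : ∀ t, ‖a t‖ ≤ C) (k : ℕ) :
    ‖vilCoeff m μ a k‖ ≤ C / Mseq m N := by
  set I := {t : Gm m | ∀ j < N, t j = 0}
  have hμI : μ I = (Mseq m N : ENNReal)⁻¹ := by simpa using hμ N 0
  have hfin : μ I < ⊤ := by
    rw [hμI, ENNReal.inv_lt_top]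
    exact Nat.cast_pos.mpr (Mseq_pos hm N)
  rw [vilCoeff, ← setIntegral_eq_integral_of_forall_compl_eq_zero (s := I)
    fun t ht => by rw [ha t ht, zero_mul]]
  calc _ ≤ C * μ.real I := norm_setIntegral_le_of_norm_le_const hfin fun t _ => by
        rw [norm_mul, Complex.norm_conj, norm_vil hm, mul_one]
        exact hC t
    _ = C / Mseq m N := by
        rw [measureReal_def, hμI, ENNReal.toReal_inv, ENNReal.toReal_natCast, div_eq_mul_inv]

lemma Svil_mul_Mseq_add {N : ℕ} {a : Gm m → ℂ}
    (ha : ∀ t : Gm m, (¬ ∀ j < N, t j = 0) → a t = 0) (μ : Measure (Gm m)) {x : Gm m}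
    (hD : Dker m (Mseq m N) x = 0) (q : ℕ) {r : ℕ} (hr : r ≤ Mseq m N) :
    Svil m μ a (q * Mseq m N + r) x
      = vilCoeff m μ a (q * Mseq m N) * vil m (q * Mseq m N) x * Dker m r x := by
  rw [Svil, sum_range_mul_Mseq_add hm _ (fun q _ hi => vilCoeff_mul_Mseq_add hm ha μ q hi) q hr x,
    hD, mul_zero, zero_add]

end Vilenkin

theorem stmt_17_general (p : ℝ) (mstar : ℕ) :
    ∃ c : ℝ, 0 < c ∧
      ∀ (m : ℕ → ℕ), (∀ k, 2 ≤ m k) → (∀ k, m k ≤ mstar) →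
        ∀ (μ : Measure (Gm m)), IsProbabilityMeasure μ → IsVilenkinHaar m μ →
          ∀ (N : ℕ) (a : Gm m → ℂ), IsPAtom m μ p N a →
            ∀ (α : ℕ), Mseq m N < α →
              ∀ (s : ℕ) (x : Gm m), lo m α ≤ s → s < N →
                (∀ j < s, x j = 0) → x s ≠ 0 →
                ‖Svil m μ a α x‖
                  ≤ c * (Mseq m N : ℝ) ^ (1 / p - 1) * (Mseq m s : ℝ) := by
  refine ⟨mstar + 1, by positivity, ?_⟩
  intro m hm hms μ _ hμ N a ⟨_, ha, haC, _⟩ α _ s x _ hsN _ hxs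
  have hN : (0 : ℝ) < Mseq m N := Nat.cast_pos.mpr (Mseq_pos hm N)
  have hcoeff (k : ℕ) : ‖vilCoeff m μ a k‖ ≤ (Mseq m N : ℝ) ^ (1 / p - 1) := by
    rw [Real.rpow_sub_one hN.ne']
    exact norm_vilCoeff_le hm hμ ha haC k
  have hDker : ‖Dker m (α % Mseq m N) x‖ ≤ mstar * Mseq m s :=
    calc _ ≤ (Mseq m (s + 1) : ℝ) := norm_Dker_le_Mseq_succ hm hxs _
      _ ≤ mstar * Mseq m s := by exact_mod_cast Nat.mul_le_mul_right _ (hms s)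
  rw [← Nat.div_add_mod' α (Mseq m N), Svil_mul_Mseq_add hm ha μ (Dker_Mseq_eq_zero hm hsN hxs) _
    (Nat.mod_lt _ (Mseq_pos hm N)).le, norm_mul, norm_mul, norm_vil hm, mul_one]
  calc _ ≤ (Mseq m N : ℝ) ^ (1 / p - 1) * (mstar * Mseq m s) :=
        mul_le_mul (hcoeff _) hDker (norm_nonneg _) (by positivity)
    _ = mstar * (Mseq m N : ℝ) ^ (1 / p - 1) * Mseq m s := by ring
    _ ≤ _ := by gcongr; linarith

/-- If `a` is a `p`-atom on `I_N`, `α > M_N`, and `x ∈ I_s \ I_{s+1}` with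
`⟨α⟩ ≤ s ≤ N - 1`, then `|S_α a (x)| ≤ c_p M_N^{1/p-1} M_s`, with `c_p`
depending only on `p` and `sup m_k`. -/
theorem stmt_17 (p : ℝ) (hp0 : 0 < p) (hp1 : p ≤ 1) (mstar : ℕ) :
    ∃ c : ℝ, 0 < c ∧
      ∀ (m : ℕ → ℕ), (∀ k, 2 ≤ m k) → (∀ k, m k ≤ mstar) →
        ∀ (μ : Measure (Gm m)), IsProbabilityMeasure μ → IsVilenkinHaar m μ →
          ∀ (N : ℕ) (a : Gm m → ℂ), IsPAtom m μ p N a →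
            ∀ (α : ℕ), Mseq m N < α →
              ∀ (s : ℕ) (x : Gm m), lo m α ≤ s → s < N →
                (∀ j < s, x j = 0) → x s ≠ 0 →
                ‖Svil m μ a α x‖
                  ≤ c * (Mseq m N : ℝ) ^ (1 / p - 1) * (Mseq m s : ℝ) :=
  stmt_17_general p mstar
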